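/- arXiv:1509.04574 — 2 statements merged into one kernel-verified Lean document; each statement's English description precedes it below -/
import Mathlib

section
/- Let G be a finite group. The intersection graph of cyclic subgroups I_c(G) is a cycle C_n if and only if n = 3 and G ≅ Z_{p^4} for some prime p. -/
/-- The vertex type of the intersection graph of cyclic subgroups:
proper nontrivial cyclic subgroups of `G`. -/
def CyclicVertex (G : Type*) [Group G] : Type _ :=
  {H : Subgroup G // H ≠ ⊥ ∧ H ≠ ⊤ ∧ IsCyclic H}

/-- The intersection graph of cyclic subgroups of a group `G`: vertices are the
proper nontrivial cyclic subgroups, two distinct vertices adjacent iff their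
intersection is nontrivial. -/
def cyclicIntersectionGraph (G : Type*) [Group G] : SimpleGraph (CyclicVertex G) where
  Adj A B := A ≠ B ∧ A.1 ⊓ B.1 ≠ ⊥
  symm := by
    constructor
    rintro A B ⟨h1, h2⟩
    exact ⟨h1.symm, by rwa [inf_comm]⟩
  loopless := by
    constructor
    rintro A ⟨h, -⟩
    exact h rfl

/-!
A subgroup `P` of prime order meets a subgroup nontrivially only if it lies in it. Hence the
neighbours of a prime-order vertex all contain `P` and are pairwise adjacent, which in a cycle
forces `n = 3`. In the resulting triangle every vertex contains `P`, and since `P` is one of the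
three vertices, a non-cyclic `G` would be the union of the other two, which is impossible for
proper subgroups. So `G` is cyclic, and a `p`-group because every prime-order subgroup is `P` or
contains it. A cyclic group of order `p ^ k` has exactly `k - 1` proper nontrivial subgroups, so
`k = 4`. Conversely, the subgroups of a cyclic `p`-group form a chain, so `ℤ/p⁴` gives a triangle.
-/

open Subgroup SimpleGraph

open Fin.CommRing in
theorem Fin.add_one_ne_sub_one {m : ℕ} (w : Fin (m + 3)) : w + 1 ≠ w - 1 := by
  intro h
  have := Nat.le_of_dvd two_pos (Fin.natCast_eq_zero.mp (by push_cast; linear_combination h))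
  omega

namespace SimpleGraph

open Fin.CommRing in
theorem cycleGraph_eq_three_of_adj_add_one_sub_one {m : ℕ} {w : Fin (m + 3)}
    (h : (cycleGraph (m + 3)).Adj (w + 1) (w - 1)) : m = 0 := by
  rcases cycleGraph_adj.mp h with h | h
  · have := Nat.le_of_dvd one_pos (Fin.natCast_eq_zero.mp (by linear_combination h))
    omega
  · have := Nat.le_of_dvd three_pos
      (Fin.natCast_eq_zero.mp (by push_cast; linear_combination -h))
    omega

theorem Iso.eq_three_of_neighbors_adj {V : Type*} {Γ : SimpleGraph V} {n : ℕ}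
    (f : Γ ≃g cycleGraph n) (hn : 3 ≤ n) {v : V}
    (hv : ∀ a b, Γ.Adj v a → Γ.Adj v b → a ≠ b → Γ.Adj a b) : n = 3 := by
  obtain ⟨m, rfl⟩ : ∃ m, n = m + 3 := ⟨n - 3, by omega⟩
  have hnbr : ∀ u, (cycleGraph (m + 3)).Adj (f v) u → Γ.Adj v (f.symm u) := fun u h => by
    simpa using f.symm.map_rel_iff.mpr h
  have hadj := hv _ _ (hnbr (f v + 1) (cycleGraph_adj.mpr (Or.inr (by simp))))
    (hnbr (f v - 1) (cycleGraph_adj.mpr (Or.inl (by simp))))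
    (f.symm.injective.ne (Fin.add_one_ne_sub_one _))
  have := cycleGraph_eq_three_of_adj_add_one_sub_one (f.symm.map_rel_iff.mp hadj)
  omega

end SimpleGraph

namespace Subgroup

variable {G : Type*} [Group G]

theorem le_of_card_prime_of_inf_ne_bot {P A : Subgroup G} (hP : (Nat.card P).Prime)
    (h : P ⊓ A ≠ ⊥) : P ≤ A := by
  have : Fact (Nat.card P).Prime := ⟨hP⟩
  refine subgroupOf_eq_top.mp ((A.subgroupOf P).eq_bot_or_eq_top_of_prime_card.resolve_left ?_)
  rwa [subgroupOf_eq_bot, disjoint_iff, inf_comm]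

theorem exists_orderOf_prime_mem [Finite G] {A : Subgroup G} (hA : A ≠ ⊥) :
    ∃ g ∈ A, (orderOf g).Prime := by
  have : Nontrivial A := (nontrivial_iff_ne_bot A).mpr hA
  have hp : (Nat.card A).minFac.Prime := Nat.minFac_prime Finite.one_lt_card.ne'
  have : Fact (Nat.card A).minFac.Prime := ⟨hp⟩
  obtain ⟨g, hg⟩ := exists_prime_orderOf_dvd_card' (G := A) _ (Nat.minFac_dvd _)
  exact ⟨g, g.2, by rwa [orderOf_coe, hg]⟩

theorem exists_notMem_and_notMem {A B : Subgroup G} (hA : A ≠ ⊤) (hB : B ≠ ⊤) :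
    ∃ x, x ∉ A ∧ x ∉ B := by
  obtain ⟨a, ha⟩ := not_forall.mp (mt (eq_top_iff' A).mpr hA)
  obtain ⟨b, hb⟩ := not_forall.mp (mt (eq_top_iff' B).mpr hB)
  by_cases haB : a ∈ B
  · by_cases hbA : b ∈ A
    · exact ⟨a * b, (mul_mem_cancel_right hbA).not.mpr ha,
        (mul_mem_cancel_left haB).not.mpr hb⟩
    · exact ⟨b, hbA, hb⟩
  · exact ⟨a, ha, haB⟩

end Subgroup

namespace IsCyclic

variable {G : Type*} [Group G] [Finite G] [IsCyclic G]

theorem subgroup_eq_of_card_eq {H K : Subgroup G} (h : Nat.card H = Nat.card K) : H = K := by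
  classical
  have : Fintype G := Fintype.ofFinite G
  have hpos : 0 < Nat.card H := Nat.card_pos
  have hroots : ∀ L : Subgroup G, Nat.card L = Nat.card H →
      (L : Set G).toFinset = Finset.univ.filter (fun x : G => x ^ Nat.card H = 1) := by
    intro L hL
    refine Finset.eq_of_subset_of_card_le (fun x hx => ?_) ?_
    · have hx : x ∈ L := by simpa using hx
      simp only [Finset.mem_filter, Finset.mem_univ, true_and, ← hL]
      simpa only [SubgroupClass.coe_pow, OneMemClass.coe_one] using
        congrArg Subtype.val (pow_card_eq_one' (G := L) (x := ⟨x, hx⟩))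
    · rw [Set.toFinset_card, ← Nat.card_eq_fintype_card]
      change _ ≤ Nat.card L
      rw [hL]
      exact IsCyclic.card_pow_eq_one_le hpos
  rw [← SetLike.coe_set_eq, ← Set.toFinset_inj, hroots H rfl, hroots K h.symm]

theorem exists_subgroup_card_eq {d : ℕ} (hd : d ∣ Nat.card G) :
    ∃ H : Subgroup G, Nat.card H = d := by
  obtain ⟨g, hg⟩ := IsCyclic.exists_ofOrder_eq_natCard (α := G)
  have hN : Nat.card G ≠ 0 := Nat.card_pos.ne'
  refine ⟨zpowers (g ^ (Nat.card G / d)), ?_⟩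
  rw [Nat.card_zpowers, orderOf_pow, hg, Nat.gcd_eq_right (Nat.div_dvd_of_dvd hd),
    Nat.div_div_self hd hN]

variable {p k : ℕ}

theorem inf_ne_bot_of_card_eq_prime_pow (hp : p.Prime) (hc : Nat.card G = p ^ k)
    {A B : Subgroup G} (hA : A ≠ ⊥) (hB : B ≠ ⊥) : A ⊓ B ≠ ⊥ := by
  obtain ⟨a, haA, ha⟩ := exists_orderOf_prime_mem hA
  obtain ⟨b, hbB, hb⟩ := exists_orderOf_prime_mem hB
  have horder : ∀ c : G, (orderOf c).Prime → orderOf c = p := fun c hc' =>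
    (Nat.prime_dvd_prime_iff_eq hc' hp).mp (hc'.dvd_of_dvd_pow (hc ▸ orderOf_dvd_natCard c))
  have hab : zpowers a = zpowers b := subgroup_eq_of_card_eq <| by
    rw [Nat.card_zpowers, Nat.card_zpowers, horder a ha, horder b hb]
  have haB : a ∈ B := zpowers_le.mpr hbB (hab ▸ mem_zpowers a)
  intro hbot
  have ha1 : a ∈ A ⊓ B := ⟨haA, haB⟩
  rw [hbot, mem_bot] at ha1
  rw [ha1, orderOf_one] at ha
  exact Nat.not_prime_one ha

theorem nonempty_cyclicVertex_equiv_fin (hp : p.Prime) (hc : Nat.card G = p ^ k) :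
    Nonempty (CyclicVertex G ≃ Fin (k - 1)) := by
  have hcard : ∀ V : CyclicVertex G, ∃ i : Fin (k - 1), Nat.card V.1 = p ^ (i.1 + 1) := by
    intro V
    obtain ⟨j, hjk, hj⟩ := (Nat.dvd_prime_pow hp).mp (hc ▸ card_subgroup_dvd_card V.1)
    have hj0 : j ≠ 0 := by
      rintro rfl
      exact V.2.1 (card_eq_one.mp hj)
    have hjk' : j ≠ k := by
      rintro rfl
      exact V.2.2.1 ((card_eq_iff_eq_top _).mp (hj.trans hc.symm))
    exact ⟨⟨j - 1, by omega⟩, by rw [hj, Nat.sub_add_cancel (Nat.pos_of_ne_zero hj0)]⟩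
  choose idx hidx using hcard
  have hpow := Nat.pow_right_injective hp.two_le
  refine ⟨Equiv.ofBijective idx ⟨fun V W hVW => ?_, fun i => ?_⟩⟩
  · exact Subtype.ext (subgroup_eq_of_card_eq (by rw [hidx, hidx, hVW]))
  obtain ⟨H, hH⟩ := exists_subgroup_card_eq (G := G) (d := p ^ (i.1 + 1))
    (hc ▸ pow_dvd_pow p (by omega))
  have hbot : H ≠ ⊥ := by
    rintro rfl
    rw [card_bot] at hH
    exact (Nat.one_lt_pow (by omega) hp.one_lt).ne hH
  have htop : H ≠ ⊤ := by
    rintro rfl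
    rw [card_top, hc] at hH
    have := hpow hH
    omega
  refine ⟨⟨H, hbot, htop, inferInstance⟩, Fin.ext ?_⟩
  have := hpow ((hidx ⟨H, hbot, htop, inferInstance⟩).symm.trans hH)
  omega

end IsCyclic

namespace CyclicVertex

variable {G : Type*} [Group G]

def ofZpowers (g : G) (hg : g ≠ 1) (htop : zpowers g ≠ ⊤) : CyclicVertex G :=
  ⟨zpowers g, by rwa [Ne, zpowers_eq_bot], htop, inferInstance⟩

theorem exists_card_prime_le [Finite G] (V : CyclicVertex G) :
    ∃ P : CyclicVertex G, (Nat.card P.1).Prime ∧ P.1 ≤ V.1 := by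
  obtain ⟨g, hgV, hg⟩ := exists_orderOf_prime_mem V.2.1
  have hle : zpowers g ≤ V.1 := zpowers_le.mpr hgV
  have hg1 : g ≠ 1 := by
    rintro rfl
    rw [orderOf_one] at hg
    exact Nat.not_prime_one hg
  exact ⟨ofZpowers g hg1 (fun h => V.2.2.1 (top_le_iff.mp (h.symm.le.trans hle))),
    by rwa [← Nat.card_zpowers] at hg, hle⟩

theorem le_of_adj {P A : CyclicVertex G} (hP : (Nat.card P.1).Prime)
    (h : (cyclicIntersectionGraph G).Adj P A) : P.1 ≤ A.1 :=
  le_of_card_prime_of_inf_ne_bot hP h.2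

theorem le_of_forall_adj [Finite G] {P : CyclicVertex G} (hP : (Nat.card P.1).Prime)
    (hadj : ∀ A B : CyclicVertex G, A ≠ B → (cyclicIntersectionGraph G).Adj A B)
    (V : CyclicVertex G) : P.1 ≤ V.1 := by
  obtain ⟨Q, -, hQV⟩ := V.exists_card_prime_le
  rcases eq_or_ne P Q with rfl | hPQ
  · exact hQV
  · exact (le_of_adj hP (hadj P Q hPQ)).trans hQV

theorem isCyclic_of_forall_le_or_le (A B : CyclicVertex G)
    (h : ∀ V : CyclicVertex G, V.1 ≤ A.1 ∨ V.1 ≤ B.1) : IsCyclic G := by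
  by_contra hnc
  obtain ⟨x, hxA, hxB⟩ := exists_notMem_and_notMem A.2.2.1 B.2.2.1
  have hx : x ≠ 1 := by
    rintro rfl
    exact hxA A.1.one_mem
  have htop : zpowers x ≠ ⊤ := fun h => hnc (isCyclic_iff_exists_zpowers_eq_top.mpr ⟨x, h⟩)
  rcases h (ofZpowers x hx htop) with hle | hle
  · exact hxA (hle (mem_zpowers x))
  · exact hxB (hle (mem_zpowers x))

theorem exists_card_eq_prime_pow_of_forall_le [Finite G] {P : Subgroup G} {p : ℕ} (hp : p.Prime)
    (hP : Nat.card P = p) (h : ∀ V : CyclicVertex G, P ≤ V.1) : ∃ k, Nat.card G = p ^ k := by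
  refine ⟨_, Nat.eq_prime_pow_of_unique_prime_dvd Nat.card_pos.ne' fun {q} hq hqG => ?_⟩
  have : Fact q.Prime := ⟨hq⟩
  obtain ⟨g, hg⟩ := exists_prime_orderOf_dvd_card' q hqG
  have hpq : p ∣ q := by
    rw [← hg, ← Nat.card_zpowers, ← hP]
    by_cases htop : zpowers g = ⊤
    · rw [htop, card_top]
      exact card_subgroup_dvd_card P
    · have hg1 : g ≠ 1 := by
        rintro rfl
        exact hq.ne_one (by simpa using hg.symm)
      exact card_dvd_of_le (h (ofZpowers g hg1 htop))
  exact ((Nat.prime_dvd_prime_iff_eq hp hq).mp hpq).symm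

end CyclicVertex

namespace cyclicIntersectionGraph

open CyclicVertex

variable {G : Type*} [Group G] [Finite G]

theorem eq_three_of_iso_cycleGraph {n : ℕ} (f : cyclicIntersectionGraph G ≃g cycleGraph n)
    (hn : 3 ≤ n) : n = 3 := by
  obtain ⟨P, hP, -⟩ := (f.symm ⟨0, by omega⟩).exists_card_prime_le
  refine f.eq_three_of_neighbors_adj hn (v := P) fun A B hA hB hAB => ⟨hAB, ?_⟩
  exact ne_bot_of_le_ne_bot P.2.1 (le_inf (le_of_adj hP hA) (le_of_adj hP hB))

theorem isCyclic_and_card_of_iso_cycleGraph_three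
    (f : cyclicIntersectionGraph G ≃g cycleGraph 3) :
    IsCyclic G ∧ ∃ p, p.Prime ∧ Nat.card G = p ^ 4 := by
  have hcomplete : ∀ u v : Fin 3, u ≠ v → (cycleGraph 3).Adj u v := by
    simp [cycleGraph_three_eq_top]
  have hadj : ∀ A B : CyclicVertex G, A ≠ B → (cyclicIntersectionGraph G).Adj A B :=
    fun A B hAB => f.map_rel_iff.mp (hcomplete _ _ (f.injective.ne hAB))
  obtain ⟨P, hP, -⟩ := (f.symm 0).exists_card_prime_le
  have hPle : ∀ V : CyclicVertex G, P.1 ≤ V.1 := le_of_forall_adj hP hadj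
  have hcyc : IsCyclic G := by
    refine isCyclic_of_forall_le_or_le (f.symm (f P + 1)) (f.symm (f P + 2)) fun V => ?_
    have hfin3 : ∀ u v : Fin 3, u = v ∨ u = v + 1 ∨ u = v + 2 := by decide
    rcases hfin3 (f V) (f P) with h | h | h
    · exact .inl (f.injective h ▸ hPle _)
    · rw [← h, RelIso.symm_apply_apply]
      exact .inl le_rfl
    · rw [← h, RelIso.symm_apply_apply]
      exact .inr le_rfl
  obtain ⟨k, hk⟩ := exists_card_eq_prime_pow_of_forall_le hP rfl hPle
  obtain ⟨e⟩ := IsCyclic.nonempty_cyclicVertex_equiv_fin hP hk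
  have hk4 : k - 1 = 3 := Fin.equiv_iff_eq.mp ⟨e.symm.trans f.toEquiv⟩
  exact ⟨hcyc, _, hP, by rw [hk]; congr 1; omega⟩

theorem nonempty_iso_cycleGraph_three [IsCyclic G] {p : ℕ} (hp : p.Prime)
    (hc : Nat.card G = p ^ 4) : Nonempty (cyclicIntersectionGraph G ≃g cycleGraph 3) := by
  obtain ⟨e⟩ := IsCyclic.nonempty_cyclicVertex_equiv_fin hp hc
  refine ⟨⟨e, fun {A B} => ?_⟩⟩
  rw [cycleGraph_three_eq_top, top_adj, e.injective.ne_iff]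
  exact ⟨fun hAB => ⟨hAB, IsCyclic.inf_ne_bot_of_card_eq_prime_pow hp hc A.2.1 B.2.1⟩,
    And.left⟩

end cyclicIntersectionGraph

theorem stmt11 (G : Type*) [Group G] [Finite G] (n : ℕ) (hn : 3 ≤ n) :
    Nonempty (cyclicIntersectionGraph G ≃g SimpleGraph.cycleGraph n) ↔
      (n = 3 ∧ ∃ p : ℕ, p.Prime ∧ Nonempty (G ≃* Multiplicative (ZMod (p ^ 4)))) := by
  constructor
  · rintro ⟨f⟩
    obtain rfl := cyclicIntersectionGraph.eq_three_of_iso_cycleGraph f hn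
    obtain ⟨hcyc, p, hp, hc⟩ :=
      cyclicIntersectionGraph.isCyclic_and_card_of_iso_cycleGraph_three f
    exact ⟨rfl, p, hp, ⟨(hc ▸ zmodCyclicMulEquiv hcyc).symm⟩⟩
  · rintro ⟨rfl, p, hp, ⟨φ⟩⟩
    have : IsCyclic G := isCyclic_of_surjective φ.symm φ.symm.surjective
    exact cyclicIntersectionGraph.nonempty_iso_cycleGraph_three hp
      ((Nat.card_congr (φ.toEquiv.trans Multiplicative.toAdd)).trans (Nat.card_zmod _))
end

section
/- For any finite group G, the girth of the intersection graph of cyclic subgroups I_c(G) is either 3 or infinity; i.e., if I_c(G) contains any cycle then it contains a triangle. -/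
/-!
Take an edge `A – B` of a cycle, so that `A` has a second neighbour `C ≠ B` and `B` a second
neighbour `D ≠ A`, and pick `x ≠ 1` in `A ⊓ B`. The cyclic subgroup `⟨x⟩` lies in both `A` and `B`.
If it differs from both, `A, B, ⟨x⟩` is a triangle. If `⟨x⟩ = A`, then `A ≤ B`, so `C` meets `B`
and `A, B, C` is a triangle; symmetrically, if `⟨x⟩ = B` then `A, B, D` is a triangle.
-/

namespace SimpleGraph

variable {V : Type*} {G : SimpleGraph V}

lemma egirth_le_three {a b c : V} (hab : G.Adj a b) (hbc : G.Adj b c) (hca : G.Adj c a) :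
    G.egirth ≤ 3 := by
  have hcycle : (Walk.cons hab (.cons hbc (.cons hca .nil))).IsCycle := by
    simp [Walk.isCycle_def, Walk.isTrail_def, hab.ne, hbc.ne, hca.ne, hab.ne', hca.ne', Sym2.eq]
  simpa using egirth_le_length hcycle

lemma exists_adj_and_other_neighbors_of_not_isAcyclic (h : ¬G.IsAcyclic) :
    ∃ a b c d, G.Adj a b ∧ G.Adj c a ∧ c ≠ b ∧ G.Adj b d ∧ d ≠ a := by
  obtain ⟨a, w, hw⟩ : ∃ a, ∃ w : G.Walk a a, w.IsCycle := by simpa [IsAcyclic] using h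
  cases w with
  | nil => exact absurd hw Walk.not_isCycle_nil
  | @cons _ b _ hab p =>
    have hp : ¬p.Nil := Walk.not_nil_of_isCycle_cons hw
    have hab_notMem : s(a, b) ∉ p.edges := ((Walk.cons_isCycle_iff p hab).mp hw).2
    refine ⟨a, b, p.penultimate, p.snd, hab, p.adj_penultimate hp, ?_, p.adj_snd hp, ?_⟩
    · intro hpen
      have := p.mk_penultimate_end_mem_edges hp
      rw [hpen, Sym2.eq_swap] at this
      exact hab_notMem this
    · intro hsnd
      have := p.mk_start_snd_mem_edges hp
      rw [hsnd, Sym2.eq_swap] at this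
      exact hab_notMem this

end SimpleGraph

namespace CyclicVertex

variable {G : Type*} [Group G]

def zpowers (A : CyclicVertex G) {x : G} (hxA : x ∈ A.1) (hx : x ≠ 1) : CyclicVertex G :=
  ⟨Subgroup.zpowers x, by simpa using hx,
    ne_top_of_le_ne_top A.2.2.1 (Subgroup.zpowers_le.mpr hxA), inferInstance⟩

end CyclicVertex

namespace cyclicIntersectionGraph

variable {G : Type*} [Group G] {A B C : CyclicVertex G}

lemma adj_of_le (hAB : A.1 ≤ B.1) (hne : A ≠ B) : (cyclicIntersectionGraph G).Adj A B :=
  ⟨hne, by rw [inf_eq_left.mpr hAB]; exact A.2.1⟩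

lemma adj_of_adj_of_le (hCA : (cyclicIntersectionGraph G).Adj C A) (hAB : A.1 ≤ B.1)
    (hCB : C ≠ B) : (cyclicIntersectionGraph G).Adj C B :=
  ⟨hCB, ne_bot_of_le_ne_bot hCA.2 (inf_le_inf_left _ hAB)⟩

lemma exists_triangle {D : CyclicVertex G} (hAB : (cyclicIntersectionGraph G).Adj A B)
    (hCA : (cyclicIntersectionGraph G).Adj C A) (hCB : C ≠ B)
    (hBD : (cyclicIntersectionGraph G).Adj B D) (hDA : D ≠ A) :
    ∃ X Y Z, (cyclicIntersectionGraph G).Adj X Y ∧ (cyclicIntersectionGraph G).Adj Y Z ∧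
      (cyclicIntersectionGraph G).Adj Z X := by
  obtain ⟨x, ⟨hxA, hxB⟩, hx⟩ := (A.1 ⊓ B.1).bot_or_exists_ne_one.resolve_left hAB.2
  set Z := A.zpowers hxA hx
  have hZA : Z.1 ≤ A.1 := Subgroup.zpowers_le.mpr hxA
  have hZB : Z.1 ≤ B.1 := Subgroup.zpowers_le.mpr hxB
  by_cases hZA_eq : Z = A
  · exact ⟨A, B, C, hAB, (adj_of_adj_of_le hCA (hZA_eq ▸ hZB) hCB).symm, hCA⟩
  by_cases hZB_eq : Z = B
  · exact ⟨A, B, D, hAB, hBD, adj_of_adj_of_le hBD.symm (hZB_eq ▸ hZA) hDA⟩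
  exact ⟨A, B, Z, hAB, (adj_of_le hZB hZB_eq).symm, adj_of_le hZA hZA_eq⟩

end cyclicIntersectionGraph

theorem stmt12_general (G : Type*) [Group G] :
    (cyclicIntersectionGraph G).egirth = 3 ∨ (cyclicIntersectionGraph G).egirth = ⊤ := by
  by_cases hacyc : (cyclicIntersectionGraph G).IsAcyclic
  · exact Or.inr (SimpleGraph.egirth_eq_top.mpr hacyc)
  obtain ⟨A, B, C, D, hAB, hCA, hCB, hBD, hDA⟩ :=
    SimpleGraph.exists_adj_and_other_neighbors_of_not_isAcyclic hacyc
  obtain ⟨X, Y, Z, hXY, hYZ, hZX⟩ := cyclicIntersectionGraph.exists_triangle hAB hCA hCB hBD hDA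
  exact Or.inl ((SimpleGraph.egirth_le_three hXY hYZ hZX).antisymm SimpleGraph.three_le_egirth)

theorem stmt12 (G : Type*) [Group G] [Finite G] :
    (cyclicIntersectionGraph G).egirth = 3 ∨ (cyclicIntersectionGraph G).egirth = ⊤ :=
  stmt12_general G
end
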